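/- Let W ⊆ ℝⁿ be a compact set with nonempty interior, and let H = {h₁, …, h_χ} be a finite set of unit vectors such that for each i there exists c_i ∈ ∂W with W ⊆ {x : h_iᵀx ≥ h_iᵀc_i}, and ⋂ᵢ {x : h_iᵀx ≥ h_iᵀc_i} is compact. Then ξ := min over unit vectors x of max over h ∈ H of hᵀx is strictly positive. -/
import Mathlib


/-- Euclidean norm of a vector in `ℝⁿ`. -/
noncomputable def nrm2 {n : ℕ} (v : Fin n → ℝ) : ℝ := Real.sqrt (∑ i, v i ^ 2)

/-- Dot product of vectors in `ℝⁿ`. -/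
def dotp {n : ℕ} (v w : Fin n → ℝ) : ℝ := ∑ i, v i * w i

lemma dotp_sub_smul {n : ℕ} (h w x : Fin n → ℝ) (t : ℝ) :
    dotp h (w - t • x) = dotp h w - t * dotp h x := by
  simp only [dotp, Pi.sub_apply, Pi.smul_apply, smul_eq_mul, mul_sub, Finset.sum_sub_distrib,
    Finset.mul_sum]
  congr 1
  exact Finset.sum_congr rfl fun i _ => by ring

lemma nrm2_one_sum {n : ℕ} {x : Fin n → ℝ} (hx : nrm2 x = 1) : ∑ i, x i ^ 2 = 1 := by
  simp only [nrm2] at hx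
  nlinarith [Real.sq_sqrt (Finset.sum_nonneg fun i (_ : i ∈ Finset.univ) => sq_nonneg (x i)),
    Real.sqrt_nonneg (∑ i, x i ^ 2)]

/-- Strict positivity of the projection constant
`ξ = min_{‖x‖₂=1} max_{h ∈ H} hᵀx` for a finite family of unit normals of
supporting half-spaces of a compact set `W` with nonempty interior, whose
half-space intersection is compact. -/
theorem stmt_1 {n : ℕ} (hn : 0 < n) (W : Set (Fin n → ℝ))
    (hWcpt : IsCompact W) (hWint : (interior W).Nonempty)
    (H : Finset (Fin n → ℝ)) (c : (Fin n → ℝ) → (Fin n → ℝ))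
    (hunit : ∀ h ∈ H, nrm2 h = 1)
    (hbdry : ∀ h ∈ H, c h ∈ frontier W)
    (hshs : ∀ h ∈ H, W ⊆ {x | dotp h (c h) ≤ dotp h x})
    (hcpt : IsCompact (⋂ h ∈ H, {x : Fin n → ℝ | dotp h (c h) ≤ dotp h x})) :
    0 < sInf {r : ℝ | ∃ x : Fin n → ℝ, nrm2 x = 1 ∧
      r = sSup ((fun h => dotp h x) '' (H : Set (Fin n → ℝ)))} := by
  obtain ⟨w, hw⟩ := hWint
  have hwW : w ∈ W := interior_subset hw
  obtain ⟨C, hC⟩ := (Metric.isBounded_iff_subset_closedBall 0).1 hcpt.isBounded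
  -- H is nonempty, else K = univ is compact, contradiction
  have hHne : H.Nonempty := by
    by_contra hne
    rw [Finset.not_nonempty_iff_eq_empty] at hne
    subst hne
    simp only [Finset.notMem_empty, Set.iInter_of_empty, Set.iInter_univ] at hC
    have h1 := hC (Set.mem_univ (fun _ : Fin n => C + 1))
    rw [Metric.mem_closedBall, dist_zero_right] at h1
    have h2 := norm_le_pi_norm (fun _ : Fin n => C + 1) ⟨0, hn⟩
    simp only [Real.norm_eq_abs] at h2
    have h3 : |C + 1| ≤ C := le_trans h2 h1
    have := le_abs_self (C + 1)
    linarith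
  set f : (Fin n → ℝ) → ℝ := fun x => H.sup' hHne (fun h => dotp h x) with hf
  have hfsup : ∀ x : Fin n → ℝ,
      sSup ((fun h => dotp h x) '' (H : Set (Fin n → ℝ))) = f x := fun x =>
    (Finset.sup'_eq_csSup_image H hHne fun h => dotp h x).symm
  have hfc : Continuous f := by
    apply Continuous.finset_sup'_apply hHne
    intro h _
    exact continuous_finset_sum _ fun i _ => (continuous_const.mul (continuous_apply i))
  set S : Set (Fin n → ℝ) := {x | nrm2 x = 1} with hS
  have hScpt : IsCompact S := by
    have hcl : IsClosed S := by
      have : Continuous (nrm2 : (Fin n → ℝ) → ℝ) :=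
        (continuous_finset_sum _ fun i _ => (continuous_apply i).pow 2).sqrt
      exact isClosed_eq this continuous_const
    have hbd : S ⊆ Set.Icc (fun _ => (-1 : ℝ)) (fun _ => (1 : ℝ)) := by
      intro x hx
      have hsum := nrm2_one_sum hx
      have key : ∀ i, x i ^ 2 ≤ 1 := by
        intro i
        calc x i ^ 2 ≤ ∑ j, x j ^ 2 :=
              Finset.single_le_sum (fun j _ => sq_nonneg (x j)) (Finset.mem_univ i)
          _ = 1 := hsum
      constructor
      · intro i; show (-1 : ℝ) ≤ x i; nlinarith [key i]
      · intro i; show x i ≤ (1 : ℝ); nlinarith [key i]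
    exact isCompact_Icc.of_isClosed_subset hcl hbd
  have hSne : S.Nonempty := by
    refine ⟨Pi.single ⟨0, hn⟩ 1, ?_⟩
    simp only [hS, Set.mem_setOf_eq, nrm2]
    rw [Finset.sum_eq_single (⟨0, hn⟩ : Fin n)]
    · simp
    · intro b _ hb; simp [Pi.single_apply, hb]
    · simp
  -- f is positive on S
  have hfpos : ∀ x ∈ S, 0 < f x := by
    intro x hxS
    by_contra hle
    push_neg at hle
    have hall : ∀ h ∈ H, dotp h x ≤ 0 := fun h hh =>
      le_trans (Finset.le_sup' (fun h => dotp h x) hh) hle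
    have hsum : ∑ i, x i ^ 2 = 1 := nrm2_one_sum hxS
    obtain ⟨i, hi⟩ : ∃ i, x i ≠ 0 := by
      by_contra hz
      push_neg at hz
      simp [hz] at hsum
    have hray : ∀ t : ℝ, 0 ≤ t →
        (w - t • x) ∈ ⋂ h ∈ H, {y : Fin n → ℝ | dotp h (c h) ≤ dotp h y} := by
      intro t ht
      simp only [Set.mem_iInter, Set.mem_setOf_eq]
      intro h hh
      rw [dotp_sub_smul]
      have h1 : dotp h (c h) ≤ dotp h w := hshs h hh hwW
      nlinarith [hall h hh]
    have hxi : 0 < |x i| := abs_pos.2 hi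
    have hC0 : 0 ≤ C := by
      have h0 := hC (hray 0 le_rfl)
      rw [Metric.mem_closedBall, dist_zero_right] at h0
      exact le_trans (norm_nonneg _) h0
    set t : ℝ := (C + |w i| + 1) / |x i| with htdef
    have ht0 : 0 ≤ t := div_nonneg (by positivity) (le_of_lt hxi)
    have hmem := hC (hray t ht0)
    rw [Metric.mem_closedBall, dist_zero_right] at hmem
    have h2 := norm_le_pi_norm (w - t • x) i
    simp only [Pi.sub_apply, Pi.smul_apply, smul_eq_mul, Real.norm_eq_abs] at h2
    have h3 : |w i - t * x i| ≤ C := le_trans h2 hmem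
    have h4 : t * |x i| = C + |w i| + 1 := by
      rw [htdef]; field_simp
    have h5 : t * |x i| - |w i| ≤ |w i - t * x i| := by
      have := abs_sub_abs_le_abs_sub (t * x i) (w i)
      rw [abs_sub_comm] at this
      rw [abs_mul, abs_of_nonneg ht0] at this
      linarith
    linarith [abs_nonneg (w i)]
  -- minimizer
  obtain ⟨x₀, hx₀S, hx₀min'⟩ := hScpt.exists_isMinOn hSne hfc.continuousOn
  have hx₀min : ∀ y ∈ S, f x₀ ≤ f y := fun y hy => hx₀min' hy
  set T : Set ℝ := {r : ℝ | ∃ x : Fin n → ℝ, nrm2 x = 1 ∧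
      r = sSup ((fun h => dotp h x) '' (H : Set (Fin n → ℝ)))} with hT
  have hTne : T.Nonempty := ⟨f x₀, x₀, hx₀S, (hfsup x₀).symm⟩
  have hlb : ∀ b ∈ T, f x₀ ≤ b := by
    rintro b ⟨x, hx1, rfl⟩
    rw [hfsup x]
    exact hx₀min x hx1
  exact lt_of_lt_of_le (hfpos x₀ hx₀S) (le_csInf hTne hlb)
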